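/- For every n ≥ 2, the submonoid STVH_n := φ₂⁻¹(identity) of STVB_n is generated as a monoid by the elements x_{k,l}, x̄_{k,l} and z_{k,l} for 1 ≤ k ≠ l ≤ n together with γ_1,…,γ_n. -/

import Mathlib

namespace SingTVB

/-- Generators of the singular twisted virtual braid monoid `STVB n`
(0-based indexing: `sig i` is the paper's σ_{i+1}, `gam j` is the paper's γ_{j+1}). -/
inductive Gen (n : ℕ) : Type
  | sig : Fin (n - 1) → Gen n
  | sigb : Fin (n - 1) → Gen n
  | rho : Fin (n - 1) → Gen n
  | tau : Fin (n - 1) → Gen n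
  | gam : Fin n → Gen n

abbrev FM (n : ℕ) := FreeMonoid (Gen n)

/-- The strand `i` (lower strand of the `i`-th crossing), as an element of `Fin n`. -/
def fa {n : ℕ} (i : Fin (n - 1)) : Fin n := ⟨i.val, by have := i.isLt; omega⟩
/-- The strand `i+1` (upper strand of the `i`-th crossing), as an element of `Fin n`. -/
def fb {n : ℕ} (i : Fin (n - 1)) : Fin n := ⟨i.val + 1, by have := i.isLt; omega⟩

def Ws {n : ℕ} (i : Fin (n - 1)) : FM n := FreeMonoid.of (Gen.sig i)
def Wsb {n : ℕ} (i : Fin (n - 1)) : FM n := FreeMonoid.of (Gen.sigb i)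
def Wr {n : ℕ} (i : Fin (n - 1)) : FM n := FreeMonoid.of (Gen.rho i)
def Wt {n : ℕ} (i : Fin (n - 1)) : FM n := FreeMonoid.of (Gen.tau i)
def Wg {n : ℕ} (j : Fin n) : FM n := FreeMonoid.of (Gen.gam j)

/-- `|i - j| > 1`. -/
def Far {m : ℕ} (i j : Fin m) : Prop := i.val + 1 < j.val ∨ j.val + 1 < i.val

/-- Defining relations of the singular twisted virtual braid monoid. -/
inductive Rel (n : ℕ) : FM n → FM n → Prop
  | ss {i j : Fin (n - 1)} (h : Far i j) : Rel n (Ws i * Ws j) (Ws j * Ws i)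
  | rr {i j : Fin (n - 1)} (h : Far i j) : Rel n (Wr i * Wr j) (Wr j * Wr i)
  | sr {i j : Fin (n - 1)} (h : Far i j) : Rel n (Ws i * Wr j) (Wr j * Ws i)
  | tt {i j : Fin (n - 1)} (h : Far i j) : Rel n (Wt i * Wt j) (Wt j * Wt i)
  | st {i j : Fin (n - 1)} (h : Far i j) : Rel n (Ws i * Wt j) (Wt j * Ws i)
  | tr {i j : Fin (n - 1)} (h : Far i j) : Rel n (Wt i * Wr j) (Wr j * Wt i)
  | sss {i j : Fin (n - 1)} (h : j.val = i.val + 1) :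
      Rel n (Ws i * Ws j * Ws i) (Ws j * Ws i * Ws j)
  | rrr {i j : Fin (n - 1)} (h : j.val = i.val + 1) :
      Rel n (Wr i * Wr j * Wr i) (Wr j * Wr i * Wr j)
  | rsr {i j : Fin (n - 1)} (h : j.val = i.val + 1) :
      Rel n (Wr i * Ws j * Wr i) (Wr j * Ws i * Wr j)
  | rtr {i j : Fin (n - 1)} (h : j.val = i.val + 1) :
      Rel n (Wr i * Wt j * Wr i) (Wr j * Wt i * Wr j)
  | sst {i j : Fin (n - 1)} (h : j.val = i.val + 1) :
      Rel n (Ws i * Ws j * Wt i) (Wt j * Ws i * Ws j)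
  | sst' {i j : Fin (n - 1)} (h : j.val = i.val + 1) :
      Rel n (Ws j * Ws i * Wt j) (Wt i * Ws j * Ws i)
  | rho2 (i : Fin (n - 1)) : Rel n (Wr i * Wr i) 1
  | ssb (i : Fin (n - 1)) : Rel n (Ws i * Wsb i) 1
  | sbs (i : Fin (n - 1)) : Rel n (Wsb i * Ws i) 1
  | stc (i : Fin (n - 1)) : Rel n (Ws i * Wt i) (Wt i * Ws i)
  | grel (i : Fin (n - 1)) : Rel n (Wg (fb i) * Wr i) (Wr i * Wg (fa i))
  | rsrg (i : Fin (n - 1)) :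
      Rel n (Wr i * Ws i * Wr i) (Wg (fb i) * Wg (fa i) * Ws i * Wg (fa i) * Wg (fb i))
  | rtrg (i : Fin (n - 1)) :
      Rel n (Wr i * Wt i * Wr i) (Wg (fb i) * Wg (fa i) * Wt i * Wg (fa i) * Wg (fb i))
  | g2 (j : Fin n) : Rel n (Wg j * Wg j) 1
  | gg (i j : Fin n) : Rel n (Wg i * Wg j) (Wg j * Wg i)
  | grc {i : Fin (n - 1)} {j : Fin n} (h1 : j ≠ fa i) (h2 : j ≠ fb i) :
      Rel n (Wg j * Wr i) (Wr i * Wg j)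
  | sgc {i : Fin (n - 1)} {j : Fin n} (h1 : j ≠ fa i) (h2 : j ≠ fb i) :
      Rel n (Ws i * Wg j) (Wg j * Ws i)
  | tgc {i : Fin (n - 1)} {j : Fin n} (h1 : j ≠ fa i) (h2 : j ≠ fb i) :
      Rel n (Wt i * Wg j) (Wg j * Wt i)

/-- The singular twisted virtual braid monoid on `n` strands. -/
abbrev STVB (n : ℕ) := PresentedMonoid (Rel n)

def mkS (n : ℕ) : FM n →* STVB n := PresentedMonoid.mk (Rel n)

def sigE (n : ℕ) (i : Fin (n - 1)) : STVB n := mkS n (Ws i)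
def sigbE (n : ℕ) (i : Fin (n - 1)) : STVB n := mkS n (Wsb i)
def rhoE (n : ℕ) (i : Fin (n - 1)) : STVB n := mkS n (Wr i)
def tauE (n : ℕ) (i : Fin (n - 1)) : STVB n := mkS n (Wt i)
def gamE (n : ℕ) (j : Fin n) : STVB n := mkS n (Wg j)

/-- The transposition `(i, i+1)` in the symmetric group on `Fin n`. -/
def swp {n : ℕ} (i : Fin (n - 1)) : Equiv.Perm (Fin n) := Equiv.swap (fa i) (fb i)

end SingTVB
namespace SingTVB

/-- ρ-generator word with a natural-number (0-based) index; junk value `1` out of range. -/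
def WrN (n : ℕ) (k : ℕ) : FM n := if h : k < n - 1 then Wr ⟨k, h⟩ else 1
def WsN (n : ℕ) (k : ℕ) : FM n := if h : k < n - 1 then Ws ⟨k, h⟩ else 1
def WsbN (n : ℕ) (k : ℕ) : FM n := if h : k < n - 1 then Wsb ⟨k, h⟩ else 1
def WtN (n : ℕ) (k : ℕ) : FM n := if h : k < n - 1 then Wt ⟨k, h⟩ else 1

/-- The ascending word `ρ_{i+1} ρ_{i+2} ⋯ ρ_{j-1}` (0-based strand indices `i < j`). -/
def asc (n i j : ℕ) : FM n := ((List.range' (i + 1) (j - 1 - i)).map (WrN n)).prod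
/-- The descending word `ρ_{j-1} ρ_{j-2} ⋯ ρ_{i+1}` (0-based strand indices `i < j`). -/
def desc (n i j : ℕ) : FM n := ((List.range' (i + 1) (j - 1 - i)).reverse.map (WrN n)).prod

/-- The word for the generator `λ_{i,j}` (0-based strands `i ≠ j`), built from
`λ_{i,i+1} = ρ_i σ̄_i` and `λ_{i+1,i} = ρ_i λ_{i,i+1} ρ_i` by conjugation. -/
def lamW (n i j : ℕ) : FM n :=
  if i < j then desc n i j * (WrN n i * WsbN n i) * asc n i j
  else desc n j i * (WrN n j * (WrN n j * WsbN n j) * WrN n j) * asc n j i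

/-- The word for `λ̄_{i,j}`, built from `λ̄_{i,i+1} = σ_i ρ_i`. -/
def lamBarW (n i j : ℕ) : FM n :=
  if i < j then desc n i j * (WsN n i * WrN n i) * asc n i j
  else desc n j i * (WrN n j * (WsN n j * WrN n j) * WrN n j) * asc n j i

/-- The word for `y_{i,j}`, built from `y_{i,i+1} = τ_i ρ_i`. -/
def yW (n i j : ℕ) : FM n :=
  if i < j then desc n i j * (WtN n i * WrN n i) * asc n i j
  else desc n j i * (WrN n j * (WtN n j * WrN n j) * WrN n j) * asc n j i

/-- The word for `x_{i,j}`, built from `x_{i,i+1} = σ_i` and `x_{i+1,i} = ρ_i σ_i ρ_i`. -/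
def xW (n i j : ℕ) : FM n :=
  if i < j then desc n i j * WsN n i * asc n i j
  else desc n j i * (WrN n j * WsN n j * WrN n j) * asc n j i

/-- The word for `x̄_{i,j}`, with `σ̄` in place of `σ`. -/
def xBarW (n i j : ℕ) : FM n :=
  if i < j then desc n i j * WsbN n i * asc n i j
  else desc n j i * (WrN n j * WsbN n j * WrN n j) * asc n j i

/-- The word for `z_{i,j}`, built from `z_{i,i+1} = τ_i` and `z_{i+1,i} = ρ_i τ_i ρ_i`. -/
def zW (n i j : ℕ) : FM n :=
  if i < j then desc n i j * WtN n i * asc n i j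
  else desc n j i * (WrN n j * WtN n j * WrN n j) * asc n j i

def lam (n : ℕ) (i j : Fin n) : STVB n := mkS n (lamW n i j)
def lamBar (n : ℕ) (i j : Fin n) : STVB n := mkS n (lamBarW n i j)
def yel (n : ℕ) (i j : Fin n) : STVB n := mkS n (yW n i j)
def xel (n : ℕ) (i j : Fin n) : STVB n := mkS n (xW n i j)
def xBar (n : ℕ) (i j : Fin n) : STVB n := mkS n (xBarW n i j)
def zel (n : ℕ) (i j : Fin n) : STVB n := mkS n (zW n i j)

end SingTVB

/-!
The `ρ_i` satisfy the Coxeter relations of type `A_{n-1}`. Hence the group `R` of units they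
generate has at most `n!` elements: every element of the group generated by `ρ_0, …, ρ_m` lies
in one of the `m + 2` cosets of the group generated by `ρ_0, …, ρ_{m-1}` with representatives
`ρ_m ρ_{m-1} ⋯ ρ_k`. As `φ₂` maps `R` onto `S_n`, it maps `R` isomorphically onto `S_n`.

Conjugating `σ_0` by `u ∈ R` only depends on `u(0)` and `u(1)`: the pointwise stabiliser of the
strands `0, 1` is generated by the `ρ_j` with `j ≥ 2`, which commute with `σ_0`. Each `x_{k,l}` is
such a conjugate, with `u(0) = k`, `u(1) = l`; so `R` permutes the `x_{k,l}` by conjugation, and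
likewise the `x̄_{k,l}`, the `z_{k,l}` and the `γ_j`. Moving the letters `ρ_i` of a word to the
front therefore writes every element as `u h` with `u ∈ R` and `h` in the submonoid `H` spanned by
the proposed generators. Since `H ⊆ ker φ₂`, an element `u h` of the kernel has `φ₂(u) = 1`,
hence `u = 1`.
-/

namespace SingTVB

open Equiv

section DownProd

variable {M : Type*} [Monoid M] (r : ℕ → M)

/-- The product `r (m - 1) * r (m - 2) * ⋯ * r k`. -/
def downProd (k m : ℕ) : M := ((List.range' k (m - k)).reverse.map r).prod

@[simp]
lemma downProd_self (k : ℕ) : downProd r k k = 1 := by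
  simp [downProd]

lemma downProd_succ {k m : ℕ} (h : k ≤ m) : downProd r k (m + 1) = r m * downProd r k m := by
  rw [downProd, downProd, show m + 1 - k = (m - k) + 1 by omega, List.range'_concat]
  simp [Nat.add_sub_cancel' h]

lemma downProd_eq_mul {k m : ℕ} (h : k < m) : downProd r k m = downProd r (k + 1) m * r k := by
  rw [downProd, downProd, show m - k = (m - (k + 1)) + 1 by omega, List.range'_succ]
  simp

lemma commute_downProd {x : M} {k m : ℕ} (h : ∀ j, k ≤ j → j < m → Commute x (r j)) :
    Commute x (downProd r k m) :=
  Commute.list_prod_right _ _ fun y hy => by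
    obtain ⟨j, hj, rfl⟩ := List.mem_map.1 hy
    rw [List.mem_reverse, List.mem_range'_1] at hj
    exact h j hj.1 (by omega)

variable {N : ℕ} (hfar : ∀ i j, i + 2 ≤ j → j < N → Commute (r i) (r j))
  (hbraid : ∀ i, i + 1 < N → r i * r (i + 1) * r i = r (i + 1) * r i * r (i + 1))
include hfar hbraid

lemma downProd_mul_slide {k s m : ℕ} (hks : k ≤ s) (hsm : s + 2 ≤ m) (hmN : m ≤ N) :
    downProd r k m * r (s + 1) = r s * downProd r k m := by
  induction m, hsm using Nat.le_induction with
  | base =>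
    have hlow : Commute (r (s + 1)) (downProd r k s) :=
      commute_downProd r fun j _ hj => (hfar j (s + 1) (by omega) (by omega)).symm
    rw [downProd_succ r (by omega), downProd_succ r hks]
    calc r (s + 1) * (r s * downProd r k s) * r (s + 1)
        = r (s + 1) * r s * r (s + 1) * downProd r k s := by
          simp only [mul_assoc]; rw [← hlow.eq]
      _ = r s * (r (s + 1) * (r s * downProd r k s)) := by
          rw [← hbraid s (by omega)]; simp only [mul_assoc]
  | succ m hm ih =>
    rw [downProd_succ r (by omega), mul_assoc, ih (by omega), ← mul_assoc,
      (hfar s m (by omega) (by omega)).eq.symm, mul_assoc]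

end DownProd

section Coxeter

variable {G : Type*} [Group G] (r : ℕ → G) {N : ℕ}
  (hsq : ∀ i, i < N → r i * r i = 1)
  (hfar : ∀ i j, i + 2 ≤ j → j < N → Commute (r i) (r j))
  (hbraid : ∀ i, i + 1 < N → r i * r (i + 1) * r i = r (i + 1) * r i * r (i + 1))
include hsq hfar hbraid

/-- Right multiplication by a generator permutes the `m + 2` cosets
`closure (r '' Iio m) * downProd r k (m + 1)`, `k ≤ m + 1`. -/
lemma exists_mul_downProd_mul_eq {m : ℕ} (hm : m < N) {a : G}
    (ha : a ∈ Subgroup.closure (r '' Set.Iio m)) {k i : ℕ} (hk : k ≤ m + 1) (hi : i ≤ m) :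
    ∃ a' ∈ Subgroup.closure (r '' Set.Iio m), ∃ k' ≤ m + 1,
      a * downProd r k (m + 1) * r i = a' * downProd r k' (m + 1) := by
  have gen : ∀ j, j < m → r j ∈ Subgroup.closure (r '' Set.Iio m) :=
    fun j hj => Subgroup.subset_closure ⟨j, hj, rfl⟩
  rcases lt_trichotomy (i + 1) k with hik | hik | hik
  · refine ⟨a * r i, mul_mem ha (gen i (by omega)), k, hk, ?_⟩
    have : Commute (r i) (downProd r k (m + 1)) :=
      commute_downProd r fun j hj hjm => hfar i j (by omega) (by omega)
    rw [mul_assoc, this.eq.symm, mul_assoc]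
  · refine ⟨a, ha, i, by omega, ?_⟩
    subst hik
    rw [mul_assoc, ← downProd_eq_mul r (by omega)]
  · rcases Nat.lt_or_ge k i with hki | hki
    · obtain ⟨s, rfl⟩ : ∃ s, i = s + 1 := ⟨i - 1, by omega⟩
      refine ⟨a * r s, mul_mem ha (gen s (by omega)), k, hk, ?_⟩
      rw [mul_assoc, downProd_mul_slide r hfar hbraid (by omega) (by omega) (by omega),
        mul_assoc]
    · obtain rfl : i = k := by omega
      refine ⟨a, ha, i + 1, by omega, ?_⟩
      rw [downProd_eq_mul r (by omega), mul_assoc, mul_assoc, hsq i (by omega), mul_one]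

theorem finite_closure_and_card_le {m : ℕ} (hm : m ≤ N) :
    Finite (Subgroup.closure (r '' Set.Iio m)) ∧
      Nat.card (Subgroup.closure (r '' Set.Iio m)) ≤ (m + 1).factorial := by
  induction m with
  | zero =>
    have : Set.Iio 0 = (∅ : Set ℕ) := by ext; simp
    simp only [this, Set.image_empty, Subgroup.closure_empty]
    exact ⟨inferInstance, by simp⟩
  | succ m ih =>
    obtain ⟨hfin, hcard⟩ := ih (by omega)
    let cosetRep : Subgroup.closure (r '' Set.Iio m) × Fin (m + 2) → G :=
      fun p => p.1 * downProd r p.2 (m + 1)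
    have hstep : ∀ x ∈ Set.range cosetRep, ∀ i < m + 1, x * r i ∈ Set.range cosetRep := by
      rintro _ ⟨⟨⟨a, ha⟩, k⟩, rfl⟩ i hi
      obtain ⟨a', ha', k', hk', h⟩ := exists_mul_downProd_mul_eq r hsq hfar hbraid (by omega) ha
        (Nat.lt_succ_iff.1 k.isLt) (Nat.lt_succ_iff.1 hi)
      exact ⟨(⟨a', ha'⟩, ⟨k', by omega⟩), h.symm⟩
    have hsub : (Subgroup.closure (r '' Set.Iio (m + 1)) : Set G) ⊆ Set.range cosetRep := by
      intro x hx
      induction hx using Subgroup.closure_induction_right with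
      | one => exact ⟨(1, Fin.last (m + 1)), by simp [cosetRep]⟩
      | mul_right x _ y hy ih =>
        obtain ⟨i, hi, rfl⟩ := hy
        exact hstep x ih i hi
      | mul_inv_cancel x _ y hy ih =>
        obtain ⟨i, hi, rfl⟩ := hy
        rw [inv_eq_of_mul_eq_one_right (hsq i (by simp at hi; omega))]
        exact hstep x ih i hi
    have hrange : (Set.range cosetRep).Finite := Set.finite_range _
    refine ⟨(hrange.subset hsub).to_subtype, ?_⟩
    calc Nat.card (Subgroup.closure (r '' Set.Iio (m + 1)))
        ≤ Nat.card (Set.range cosetRep) := Nat.card_mono hrange hsub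
      _ ≤ Nat.card (Subgroup.closure (r '' Set.Iio m) × Fin (m + 2)) := Finite.card_range_le _
      _ ≤ (m + 1).factorial * (m + 2) := by rw [Nat.card_prod, Nat.card_fin]; gcongr
      _ = (m + 2).factorial := by rw [Nat.factorial_succ (m + 1)]; ring

end Coxeter

section AdjSwap

variable {n : ℕ}

/-- The transposition `(t, t + 1)`, with junk value `1` when `t + 1` is not a strand. -/
def adjSwap (n t : ℕ) : Perm (Fin n) := if h : t < n - 1 then swp ⟨t, h⟩ else 1

lemma adjSwap_apply_val {t : ℕ} (ht : t < n - 1) (x : Fin n) :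
    (adjSwap n t x).val = if x.val = t then t + 1 else if x.val = t + 1 then t else x.val := by
  rw [adjSwap, dif_pos ht, swp, swap_apply_def]
  simp only [fa, fb, Fin.ext_iff]
  split_ifs <;> rfl

lemma adjSwap_apply_of_ne {t : ℕ} {x : Fin n} (h1 : x.val ≠ t) (h2 : x.val ≠ t + 1) :
    adjSwap n t x = x := by
  by_cases ht : t < n - 1
  · exact Fin.ext (by rw [adjSwap_apply_val ht, if_neg h1, if_neg h2])
  · rw [adjSwap, dif_neg ht, Perm.one_apply]

lemma adjSwap_apply_left {t : ℕ} (ht : t + 1 < n) : adjSwap n t ⟨t, by omega⟩ = ⟨t + 1, ht⟩ :=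
  Fin.ext (by rw [adjSwap_apply_val (by omega)]; simp)

lemma adjSwap_apply_right {t : ℕ} (ht : t + 1 < n) : adjSwap n t ⟨t + 1, ht⟩ = ⟨t, by omega⟩ :=
  Fin.ext (by rw [adjSwap_apply_val (by omega)]; simp)

lemma isSwap_adjSwap {t : ℕ} (ht : t < n - 1) : (adjSwap n t).IsSwap :=
  ⟨fa ⟨t, ht⟩, fb ⟨t, ht⟩, by simp [fa, fb, Fin.ext_iff], by rw [adjSwap, dif_pos ht, swp]⟩

lemma mem_closure_adjSwap {a : ℕ} {f : Perm (Fin n)} (hf : ∀ x : Fin n, x.val < a → f x = x) :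
    f ∈ Subgroup.closure (adjSwap n '' Set.Ico a (n - 1)) := by
  set H := Subgroup.closure (adjSwap n '' Set.Ico a (n - 1))
  have hswap : ∀ g ∈ adjSwap n '' Set.Ico a (n - 1), g.IsSwap := by
    rintro _ ⟨t, ht, rfl⟩
    exact isSwap_adjSwap ht.2
  refine (mem_closure_isSwap hswap).2 ⟨Set.toFinite _, fun x => ?_⟩
  by_cases hx : x.val < a
  · rw [hf x hx]
    exact MulAction.mem_orbit_self _
  have hfx : ¬ (f x).val < a := fun h => hx (by rw [← f.injective (hf _ h)]; exact h)
  have ha : a < n := by omega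
  have horbit : ∀ d (hd : a + d < n), (⟨a + d, hd⟩ : Fin n) ∈ MulAction.orbit H ⟨a, ha⟩ := by
    intro d
    induction d with
    | zero => exact fun _ => MulAction.mem_orbit_self _
    | succ d ih =>
      intro hd
      have hmem : adjSwap n (a + d) ∈ H :=
        Subgroup.subset_closure ⟨a + d, ⟨by omega, by omega⟩, rfl⟩
      have := MulAction.mem_orbit_of_mem_orbit (⟨_, hmem⟩ : H) (ih (by omega))
      rwa [Subgroup.smul_def, Perm.smul_def, adjSwap_apply_left] at this
  have hx' := horbit (x.val - a) (by omega)
  have hfx' := horbit ((f x).val - a) (by omega)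
  simp only [Nat.add_sub_cancel' (not_lt.1 hx), Nat.add_sub_cancel' (not_lt.1 hfx)] at hx' hfx'
  show f x ∈ MulAction.orbit H x
  rwa [MulAction.orbit_eq_iff.2 hx']

lemma downProd_adjSwap_apply_of_lt {k m : ℕ} {x : Fin n} (hx : x.val < k) :
    downProd (adjSwap n) k m x = x := by
  induction m with
  | zero => simp [downProd]
  | succ m ih =>
    by_cases hkm : k ≤ m
    · rw [downProd_succ _ hkm, Perm.mul_apply, ih, adjSwap_apply_of_ne (by omega) (by omega)]
    · simp [downProd, show m + 1 - k = 0 by omega]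

lemma downProd_adjSwap_apply_self {k m : ℕ} (hkm : k ≤ m) (hm : m < n) :
    (downProd (adjSwap n) k m ⟨k, by omega⟩).val = m := by
  induction m, hkm using Nat.le_induction with
  | base => simp
  | succ m hkm ih =>
    rw [downProd_succ _ hkm, Perm.mul_apply, adjSwap_apply_val (by omega)]
    have := ih (by omega)
    split_ifs <;> omega

end AdjSwap

section Units

variable {n : ℕ}

lemma mkS_eq_of_rel {a b : FM n} (h : Rel n a b) : mkS n a = mkS n b :=
  PresentedMonoid.mk_eq_mk_of_rel h

lemma mkS_WrN_mul_self (t : ℕ) : mkS n (WrN n t) * mkS n (WrN n t) = 1 := by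
  unfold WrN
  split_ifs
  · rw [← map_mul, mkS_eq_of_rel (Rel.rho2 _), map_one]
  · simp

def rhoU (n t : ℕ) : (STVB n)ˣ :=
  ⟨mkS n (WrN n t), mkS n (WrN n t), mkS_WrN_mul_self t, mkS_WrN_mul_self t⟩

lemma rhoU_inv (t : ℕ) : (rhoU n t)⁻¹ = rhoU n t := rfl

lemma rhoU_mul_self (t : ℕ) : rhoU n t * rhoU n t = 1 := Units.ext (mkS_WrN_mul_self t)

lemma val_rhoU_of_lt {t : ℕ} (ht : t < n - 1) : (rhoU n t : STVB n) = rhoE n ⟨t, ht⟩ := by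
  simp [rhoU, WrN, ht, rhoE]

lemma rhoU_of_not_lt {t : ℕ} (ht : ¬ t < n - 1) : rhoU n t = 1 :=
  Units.ext (by simp [rhoU, WrN, ht])

lemma commute_rhoU {i j : ℕ} (h : i + 2 ≤ j) : Commute (rhoU n i) (rhoU n j) := by
  by_cases hj : j < n - 1
  · refine Units.ext ?_
    simp only [Units.val_mul, val_rhoU_of_lt hj, val_rhoU_of_lt (show i < n - 1 by omega), rhoE,
      ← map_mul]
    exact mkS_eq_of_rel (Rel.rr (Or.inl (by simp; omega)))
  · rw [rhoU_of_not_lt hj]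
    exact Commute.one_right _

lemma rhoU_braid {i : ℕ} (h : i + 2 < n) :
    rhoU n i * rhoU n (i + 1) * rhoU n i = rhoU n (i + 1) * rhoU n i * rhoU n (i + 1) := by
  refine Units.ext ?_
  simp only [Units.val_mul, val_rhoU_of_lt (show i < n - 1 by omega),
    val_rhoU_of_lt (show i + 1 < n - 1 by omega), rhoE, ← map_mul]
  exact mkS_eq_of_rel (Rel.rrr rfl)

@[simp]
lemma val_rhoU_mul_val_rhoU_mul (t : ℕ) (x : STVB n) :
    (rhoU n t : STVB n) * ((rhoU n t : STVB n) * x) = x :=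
  Units.mul_inv_cancel_left (rhoU n t) x

lemma eq_conj_of_rho_conj {i : ℕ} {x y : STVB n}
    (h : ↑(rhoU n i) * x * ↑(rhoU n i) = ↑(rhoU n (i + 1)) * y * ↑(rhoU n (i + 1))) :
    x = ↑(rhoU n i * rhoU n (i + 1)) * y * ↑(rhoU n i * rhoU n (i + 1))⁻¹ := by
  calc x = ↑(rhoU n i) * (↑(rhoU n i) * x * ↑(rhoU n i)) * ↑(rhoU n i) := by
        simp only [mul_assoc, ← Units.val_mul, rhoU_mul_self, Units.val_one, mul_one,
          val_rhoU_mul_val_rhoU_mul]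
    _ = _ := by
        rw [h, mul_inv_rev, rhoU_inv, rhoU_inv]
        simp only [Units.val_mul, mul_assoc]

end Units

section RhoGroup

variable {n : ℕ} (φ : STVB n →* Perm (Fin n))

def permOfUnits : (STVB n)ˣ →* Perm (Fin n) := φ.comp (Units.coeHom (STVB n))

@[simp]
lemma permOfUnits_apply (u : (STVB n)ˣ) : permOfUnits φ u = φ u := rfl

def rhoGroup (n : ℕ) : Subgroup (STVB n)ˣ := Subgroup.closure (rhoU n '' Set.Iio (n - 1))

variable {φ} (hr : ∀ i : Fin (n - 1), φ (rhoE n i) = swp i)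
include hr

lemma permOfUnits_rhoU (t : ℕ) : permOfUnits φ (rhoU n t) = adjSwap n t := by
  by_cases ht : t < n - 1
  · rw [permOfUnits_apply, val_rhoU_of_lt ht, hr, adjSwap, dif_pos ht]
  · rw [rhoU_of_not_lt ht, map_one, adjSwap, dif_neg ht]

lemma map_closure_rhoU (s : Set ℕ) :
    (Subgroup.closure (rhoU n '' s)).map (permOfUnits φ) = Subgroup.closure (adjSwap n '' s) := by
  rw [MonoidHom.map_closure, Set.image_image]
  simp only [permOfUnits_rhoU hr]

lemma map_rhoGroup : (rhoGroup n).map (permOfUnits φ) = ⊤ := by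
  rw [rhoGroup, map_closure_rhoU hr, eq_top_iff]
  intro f _
  have hIco : Set.Ico 0 (n - 1) = Set.Iio (n - 1) := by ext; simp
  simpa [hIco] using mem_closure_adjSwap (a := 0) (f := f) (by simp)

lemma injOn_rhoGroup : Set.InjOn (permOfUnits φ) (rhoGroup n) := by
  obtain ⟨hfin, hcard⟩ := finite_closure_and_card_le (rhoU n) (N := n - 1)
    (fun i _ => rhoU_mul_self i) (fun i j h _ => commute_rhoU h)
    (fun i h => rhoU_braid (by omega)) le_rfl
  have : Finite (rhoGroup n) := hfin
  have hsurj : Function.Surjective ((permOfUnits φ).comp (rhoGroup n).subtype) := by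
    intro f
    obtain ⟨u, hu, rfl⟩ := (map_rhoGroup hr).ge (Subgroup.mem_top f)
    exact ⟨⟨u, hu⟩, rfl⟩
  have hbij := hsurj.bijective_of_nat_card_le <| by
    rw [Nat.card_perm, Nat.card_fin]
    exact hcard.trans_eq (by rcases n with _ | n <;> rfl)
  intro u hu v hv h
  exact congrArg Subtype.val (hbij.1 (a₁ := ⟨u, hu⟩) (a₂ := ⟨v, hv⟩) h)

end RhoGroup

section Family

variable {n : ℕ}

/-- The relations `ρ_i σ_{i+1} ρ_i = ρ_{i+1} σ_i ρ_{i+1}` and `σ_0 ρ_j = ρ_j σ_0` (`j ≥ 2`),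
shared by the families `σ`, `σ̄` and `τ`. -/
structure IsRhoFamily (G : ℕ → STVB n) : Prop where
  conj_succ : ∀ i, i + 2 < n →
    G (i + 1) = ↑(rhoU n i * rhoU n (i + 1)) * G i * ↑(rhoU n i * rhoU n (i + 1))⁻¹
  commute_zero : ∀ j, 2 ≤ j → Commute (rhoU n j : STVB n) (G 0)

lemma IsRhoFamily.inv {S : ℕ → (STVB n)ˣ} (hS : IsRhoFamily fun t => (S t : STVB n)) :
    IsRhoFamily fun t => ((S t)⁻¹ : (STVB n)ˣ).val where
  conj_succ i hi := by
    have h : S (i + 1) = rhoU n i * rhoU n (i + 1) * S i * (rhoU n i * rhoU n (i + 1))⁻¹ :=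
      Units.ext (by simpa only [Units.val_mul] using hS.conj_succ i hi)
    simp only [h, mul_inv_rev, inv_inv, Units.val_mul, mul_assoc]
  commute_zero j hj := (hS.commute_zero j hj).units_inv_right

lemma isRhoFamily_of_rel (W : Fin (n - 1) → FM n)
    (hconj : ∀ {i j : Fin (n - 1)}, j.val = i.val + 1 →
      Rel n (Wr i * W j * Wr i) (Wr j * W i * Wr j))
    (hfar : ∀ {i j : Fin (n - 1)}, Far i j → Rel n (W i * Wr j) (Wr j * W i)) :
    IsRhoFamily (mkS n ∘ fun t => if h : t < n - 1 then W ⟨t, h⟩ else 1) where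
  conj_succ i hi := by
    refine eq_conj_of_rho_conj ?_
    simp only [Function.comp_apply, dif_pos (show i < n - 1 by omega),
      dif_pos (show i + 1 < n - 1 by omega), val_rhoU_of_lt (show i < n - 1 by omega),
      val_rhoU_of_lt (show i + 1 < n - 1 by omega), rhoE, Wr, ← map_mul]
    exact mkS_eq_of_rel (hconj rfl)
  commute_zero j hj := by
    by_cases hjn : j < n - 1
    · simp only [Function.comp_apply, dif_pos (show 0 < n - 1 by omega),
        val_rhoU_of_lt hjn, rhoE, Wr, Commute, SemiconjBy, ← map_mul]
      exact (mkS_eq_of_rel (hfar (Or.inl (by simp; omega)))).symm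
    · rw [rhoU_of_not_lt hjn]
      exact Commute.one_left _

lemma isRhoFamily_sig : IsRhoFamily (mkS n ∘ WsN n) :=
  isRhoFamily_of_rel Ws Rel.rsr Rel.sr

lemma isRhoFamily_tau : IsRhoFamily (mkS n ∘ WtN n) :=
  isRhoFamily_of_rel Wt Rel.rtr Rel.tr

lemma mkS_WsN_mul_WsbN (t : ℕ) : mkS n (WsN n t) * mkS n (WsbN n t) = 1 := by
  unfold WsN WsbN
  split_ifs
  · rw [← map_mul, mkS_eq_of_rel (Rel.ssb _), map_one]
  · simp

lemma mkS_WsbN_mul_WsN (t : ℕ) : mkS n (WsbN n t) * mkS n (WsN n t) = 1 := by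
  unfold WsN WsbN
  split_ifs
  · rw [← map_mul, mkS_eq_of_rel (Rel.sbs _), map_one]
  · simp

def sigU (n t : ℕ) : (STVB n)ˣ :=
  ⟨mkS n (WsN n t), mkS n (WsbN n t), mkS_WsN_mul_WsbN t, mkS_WsbN_mul_WsN t⟩

lemma isRhoFamily_sigb : IsRhoFamily (mkS n ∘ WsbN n) :=
  IsRhoFamily.inv (S := sigU n) isRhoFamily_sig

end Family

section Conj

variable {n : ℕ}

lemma mkS_desc (i j : ℕ) : mkS n (desc n i j) = ↑(downProd (rhoU n) (i + 1) j) := by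
  rw [desc, downProd, show j - 1 - i = j - (i + 1) by omega, ← Units.coeHom_apply,
    map_list_prod, map_list_prod, List.map_map, List.map_map]
  rfl

lemma mkS_asc (i j : ℕ) : mkS n (asc n i j) = ↑(downProd (rhoU n) (i + 1) j)⁻¹ := by
  have hinv : (fun x => x⁻¹) ∘ rhoU n = rhoU n := funext rhoU_inv
  rw [asc, downProd, List.prod_inv_reverse, List.map_map, hinv, List.map_reverse,
    List.reverse_reverse, show j - 1 - i = j - (i + 1) by omega, ← Units.coeHom_apply,
    map_list_prod, map_list_prod, List.map_map, List.map_map]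
  rfl

lemma downProd_mem_rhoGroup {k m : ℕ} (hm : m ≤ n - 1) : downProd (rhoU n) k m ∈ rhoGroup n := by
  refine Subgroup.list_prod_mem _ fun u hu => ?_
  obtain ⟨t, ht, rfl⟩ := List.mem_map.1 hu
  rw [List.mem_reverse, List.mem_range'_1] at ht
  exact Subgroup.subset_closure ⟨t, by simp only [Set.mem_Iio]; omega, rfl⟩

lemma rhoU_mem_rhoGroup {t : ℕ} (ht : t < n - 1) : rhoU n t ∈ rhoGroup n :=
  Subgroup.subset_closure ⟨t, ht, rfl⟩

variable {φ : STVB n →* Perm (Fin n)} {G : ℕ → STVB n}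

lemma IsRhoFamily.commute_of_mem (hG : IsRhoFamily G) {w : (STVB n)ˣ}
    (hw : w ∈ Subgroup.closure (rhoU n '' Set.Ico 2 (n - 1))) : Commute (w : STVB n) (G 0) := by
  induction hw using Subgroup.closure_induction'' with
  | mem _ h =>
    obtain ⟨j, hj, rfl⟩ := h
    exact hG.commute_zero j hj.1
  | inv_mem _ h =>
    obtain ⟨j, hj, rfl⟩ := h
    exact hG.commute_zero j hj.1
  | one => exact Commute.one_left _
  | mul _ _ _ _ h1 h2 =>
    rw [Units.val_mul]
    exact h1.mul_left h2

variable (hr : ∀ i : Fin (n - 1), φ (rhoE n i) = swp i)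
include hr

lemma permOfUnits_downProd (k m : ℕ) :
    permOfUnits φ (downProd (rhoU n) k m) = downProd (adjSwap n) k m := by
  rw [downProd, downProd, map_list_prod, List.map_map]
  congr 2
  exact funext (permOfUnits_rhoU hr)

lemma IsRhoFamily.conj_eq_of_apply_eq (hG : IsRhoFamily G) (hn : 2 ≤ n) {u v : (STVB n)ˣ}
    (hu : u ∈ rhoGroup n) (hv : v ∈ rhoGroup n)
    (h0 : permOfUnits φ u ⟨0, by omega⟩ = permOfUnits φ v ⟨0, by omega⟩)
    (h1 : permOfUnits φ u ⟨1, hn⟩ = permOfUnits φ v ⟨1, hn⟩) :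
    ↑u * G 0 * ↑u⁻¹ = ↑v * G 0 * ↑v⁻¹ := by
  have hfix : ∀ x : Fin n, x.val < 2 → permOfUnits φ (v⁻¹ * u) x = x := by
    intro x hx
    rw [map_mul, map_inv, Perm.mul_apply, Perm.inv_eq_iff_eq]
    obtain hx | hx : x = ⟨0, by omega⟩ ∨ x = ⟨1, hn⟩ := by
      simp only [Fin.ext_iff]
      omega
    · rw [hx]; exact h0
    · rw [hx]; exact h1
  obtain ⟨w, hw, hwu⟩ : permOfUnits φ (v⁻¹ * u) ∈
      (Subgroup.closure (rhoU n '' Set.Ico 2 (n - 1))).map (permOfUnits φ) := by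
    rw [map_closure_rhoU hr]
    exact mem_closure_adjSwap hfix
  have hw' : w ∈ rhoGroup n := Subgroup.closure_mono (Set.image_mono fun _ ht => ht.2) hw
  obtain rfl : u = v * w := by
    rw [injOn_rhoGroup hr hw' (mul_mem (inv_mem hv) hu) hwu, mul_inv_cancel_left]
  simp only [Units.val_mul, mul_inv_rev, mul_assoc]
  rw [← mul_assoc (w : STVB n), (hG.commute_of_mem hw).eq, mul_assoc, Units.mul_inv_cancel_left]

lemma IsRhoFamily.exists_conj_zero (hG : IsRhoFamily G) (hn : 2 ≤ n) {i : ℕ} (hi : i + 1 < n) :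
    ∃ E ∈ rhoGroup n, permOfUnits φ E ⟨0, by omega⟩ = ⟨i, by omega⟩ ∧
      permOfUnits φ E ⟨1, hn⟩ = ⟨i + 1, hi⟩ ∧ G i = ↑E * G 0 * ↑E⁻¹ := by
  induction i with
  | zero => exact ⟨1, one_mem _, by simp, by simp, by simp⟩
  | succ i ih =>
    obtain ⟨E, hE, h0, h1, hGi⟩ := ih (by omega)
    refine ⟨rhoU n i * rhoU n (i + 1) * E,
      mul_mem (mul_mem (rhoU_mem_rhoGroup (by omega)) (rhoU_mem_rhoGroup (by omega))) hE,
      ?_, ?_, ?_⟩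
    · rw [map_mul, map_mul, Perm.mul_apply, Perm.mul_apply, h0, permOfUnits_rhoU hr,
        permOfUnits_rhoU hr, adjSwap_apply_of_ne (t := i + 1) (by dsimp; omega) (by dsimp; omega),
        adjSwap_apply_left]
    · rw [map_mul, map_mul, Perm.mul_apply, Perm.mul_apply, h1, permOfUnits_rhoU hr,
        permOfUnits_rhoU hr, adjSwap_apply_left hi,
        adjSwap_apply_of_ne (by dsimp; omega) (by dsimp; omega)]
    · rw [hG.conj_succ i (by omega), hGi]
      simp only [mul_inv_rev, Units.val_mul, mul_assoc]

end Conj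

section PairWord

variable {n : ℕ} {φ : STVB n →* Perm (Fin n)} {W : ℕ → FM n}

/-- The common shape of the words `xW`, `xBarW` and `zW`, with `W t` in place of `σ_t`. -/
def pairWord (W : ℕ → FM n) (i j : ℕ) : FM n :=
  if i < j then desc n i j * W i * asc n i j
  else desc n j i * (WrN n j * W j * WrN n j) * asc n j i

lemma map_mkS_pairWord (hW : ∀ t, φ (mkS n (W t)) = 1) (k l : ℕ) :
    φ (mkS n (pairWord W k l)) = 1 := by
  unfold pairWord
  split_ifs
  · simp only [map_mul, hW, mul_one, mkS_desc, mkS_asc]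
    rw [← map_mul, Units.mul_inv, map_one]
  · simp only [map_mul, hW, mul_one, mkS_desc, mkS_asc]
    rw [← map_mul φ (mkS n (WrN n _)), mkS_WrN_mul_self, map_one, mul_one, ← map_mul,
      Units.mul_inv, map_one]

variable (hr : ∀ i : Fin (n - 1), φ (rhoE n i) = swp i)
include hr

lemma IsRhoFamily.exists_conj_pairWord (hG : IsRhoFamily (mkS n ∘ W)) (hn : 2 ≤ n)
    {k l : Fin n} (hkl : k ≠ l) :
    ∃ u ∈ rhoGroup n, permOfUnits φ u ⟨0, by omega⟩ = k ∧ permOfUnits φ u ⟨1, hn⟩ = l ∧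
      mkS n (pairWord W k l) = ↑u * mkS n (W 0) * ↑u⁻¹ := by
  rcases lt_or_gt_of_ne (Fin.val_ne_of_ne hkl) with hlt | hlt
  · obtain ⟨E, hE, h0, h1, hGk⟩ := hG.exists_conj_zero hr hn (i := k) (by omega)
    refine ⟨downProd (rhoU n) (k + 1) l * E, mul_mem (downProd_mem_rhoGroup (by omega)) hE,
      ?_, ?_, ?_⟩
    · rw [map_mul, Perm.mul_apply, h0, permOfUnits_downProd hr]
      exact downProd_adjSwap_apply_of_lt (by simp)
    · rw [map_mul, Perm.mul_apply, h1, permOfUnits_downProd hr]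
      exact Fin.ext (downProd_adjSwap_apply_self hlt l.isLt)
    · rw [pairWord, if_pos hlt, map_mul, map_mul, mkS_desc, mkS_asc]
      change _ * (mkS n ∘ W) k * _ = _
      rw [hGk]
      simp only [Function.comp_apply, mul_inv_rev, Units.val_mul, mul_assoc]
  · obtain ⟨E, hE, h0, h1, hGl⟩ := hG.exists_conj_zero hr hn (i := l) (by omega)
    refine ⟨downProd (rhoU n) (l + 1) k * rhoU n l * E,
      mul_mem (mul_mem (downProd_mem_rhoGroup (by omega)) (rhoU_mem_rhoGroup (by omega))) hE,
      ?_, ?_, ?_⟩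
    · rw [map_mul, map_mul, Perm.mul_apply, Perm.mul_apply, h0, permOfUnits_rhoU hr,
        adjSwap_apply_left (by omega), permOfUnits_downProd hr]
      exact Fin.ext (downProd_adjSwap_apply_self hlt k.isLt)
    · rw [map_mul, map_mul, Perm.mul_apply, Perm.mul_apply, h1, permOfUnits_rhoU hr,
        adjSwap_apply_right, permOfUnits_downProd hr]
      exact downProd_adjSwap_apply_of_lt (by simp)
    · rw [pairWord, if_neg (by omega), map_mul, map_mul, map_mul, map_mul, mkS_desc, mkS_asc]
      change _ * (↑(rhoU n l) * (mkS n ∘ W) l * ↑(rhoU n l)) * _ = _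
      rw [hGl]
      simp only [Function.comp_apply, mul_inv_rev, Units.val_mul, mul_assoc, rhoU_inv]

lemma IsRhoFamily.conj_pairWord (hG : IsRhoFamily (mkS n ∘ W)) {u : (STVB n)ˣ}
    (hu : u ∈ rhoGroup n) {k l : Fin n} (hkl : k ≠ l) :
    ↑u * mkS n (pairWord W k l) * ↑u⁻¹ =
      mkS n (pairWord W (permOfUnits φ u k) (permOfUnits φ u l)) := by
  have hn : 2 ≤ n := by have := Fin.val_ne_of_ne hkl; omega
  obtain ⟨v, hv, hv0, hv1, hkl_eq⟩ := hG.exists_conj_pairWord hr hn hkl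
  obtain ⟨v', hv', hv'0, hv'1, huv_eq⟩ :=
    hG.exists_conj_pairWord hr hn ((permOfUnits φ u).injective.ne hkl)
  have key := hG.conj_eq_of_apply_eq hr hn (mul_mem hu hv) hv'
    (by rw [map_mul, Perm.mul_apply, hv0, hv'0]) (by rw [map_mul, Perm.mul_apply, hv1, hv'1])
  rw [hkl_eq, huv_eq]
  simpa only [Function.comp_apply, mul_inv_rev, Units.val_mul, mul_assoc] using key

end PairWord

section Assembly

variable {n : ℕ} {φ : STVB n →* Perm (Fin n)}

lemma rhoU_conj_gamE (t : ℕ) (j : Fin n) :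
    ↑(rhoU n t) * gamE n j * ↑(rhoU n t)⁻¹ = gamE n (adjSwap n t j) := by
  by_cases ht : t < n - 1
  · set i : Fin (n - 1) := ⟨t, ht⟩
    rw [rhoU_inv, val_rhoU_of_lt ht, adjSwap, dif_pos ht, swp]
    have hsq : rhoE n i * rhoE n i = 1 := by
      rw [← val_rhoU_of_lt ht, ← Units.val_mul, rhoU_mul_self, Units.val_one]
    have hswap : gamE n (fb i) * rhoE n i = rhoE n i * gamE n (fa i) := by
      simp only [gamE, rhoE, ← map_mul]
      exact mkS_eq_of_rel (Rel.grel i)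
    by_cases h1 : j = fa i
    · rw [h1, swap_apply_left, ← hswap, mul_assoc, hsq, mul_one]
    by_cases h2 : j = fb i
    · rw [h2, swap_apply_right, mul_assoc, hswap, ← mul_assoc, hsq, one_mul]
    have hcomm : gamE n j * rhoE n i = rhoE n i * gamE n j := by
      simp only [gamE, rhoE, ← map_mul]
      exact mkS_eq_of_rel (Rel.grc h1 h2)
    rw [swap_apply_of_ne_of_ne h1 h2, ← hcomm, mul_assoc, hsq, mul_one]
  · simp [rhoU_of_not_lt ht, adjSwap, ht]

lemma fa_ne_fb (i : Fin (n - 1)) : fa i ≠ fb i := by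
  simp [fa, fb, Fin.ext_iff]

lemma sigE_eq_xel (i : Fin (n - 1)) : sigE n i = xel n (fa i) (fb i) := by
  simp [sigE, xel, xW, desc, asc, WsN, fa, fb]

lemma sigbE_eq_xBar (i : Fin (n - 1)) : sigbE n i = xBar n (fa i) (fb i) := by
  simp [sigbE, xBar, xBarW, desc, asc, WsbN, fa, fb]

lemma tauE_eq_zel (i : Fin (n - 1)) : tauE n i = zel n (fa i) (fb i) := by
  simp [tauE, zel, zW, desc, asc, WtN, fa, fb]

def generators (n : ℕ) : Set (STVB n) :=
  {x : STVB n | ∃ k l : Fin n, k ≠ l ∧ (x = xel n k l ∨ x = xBar n k l ∨ x = zel n k l)}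
    ∪ Set.range (gamE n)

lemma map_mkS_dite {X : Fin (n - 1) → FM n} (hX : ∀ i, φ (mkS n (X i)) = 1) (t : ℕ) :
    φ (mkS n (if h : t < n - 1 then X ⟨t, h⟩ else 1)) = 1 := by
  split_ifs
  exacts [hX _, by simp]

lemma generators_subset_ker (hs : ∀ i : Fin (n - 1), φ (sigE n i) = 1)
    (hsb : ∀ i : Fin (n - 1), φ (sigbE n i) = 1) (ht : ∀ i : Fin (n - 1), φ (tauE n i) = 1)
    (hg : ∀ j : Fin n, φ (gamE n j) = 1) : ∀ x ∈ generators n, φ x = 1 := by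
  rintro x (⟨k, l, -, rfl | rfl | rfl⟩ | ⟨j, rfl⟩)
  · exact map_mkS_pairWord (map_mkS_dite (X := Ws) hs) k l
  · exact map_mkS_pairWord (map_mkS_dite (X := Wsb) hsb) k l
  · exact map_mkS_pairWord (map_mkS_dite (X := Wt) ht) k l
  · exact hg j

variable (hr : ∀ i : Fin (n - 1), φ (rhoE n i) = swp i)
include hr

lemma conj_gamE {u : (STVB n)ˣ} (hu : u ∈ rhoGroup n) (j : Fin n) :
    ↑u * gamE n j * ↑u⁻¹ = gamE n (permOfUnits φ u j) := by
  induction hu using Subgroup.closure_induction'' generalizing j with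
  | mem _ h =>
    obtain ⟨t, -, rfl⟩ := h
    rw [rhoU_conj_gamE, permOfUnits_rhoU hr]
  | inv_mem _ h =>
    obtain ⟨t, -, rfl⟩ := h
    rw [rhoU_inv, rhoU_conj_gamE, permOfUnits_rhoU hr]
  | one => simp
  | mul u v _ _ hu hv =>
    rw [map_mul, Perm.mul_apply, ← hu, ← hv]
    simp only [Units.val_mul, mul_inv_rev, mul_assoc]

lemma conj_mem_generators {u : (STVB n)ˣ} (hu : u ∈ rhoGroup n) {x : STVB n}
    (hx : x ∈ generators n) : ↑u * x * ↑u⁻¹ ∈ generators n := by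
  rcases hx with ⟨k, l, hkl, rfl | rfl | rfl⟩ | ⟨j, rfl⟩
  · exact Or.inl ⟨_, _, (permOfUnits φ u).injective.ne hkl,
      Or.inl (isRhoFamily_sig.conj_pairWord hr hu hkl)⟩
  · exact Or.inl ⟨_, _, (permOfUnits φ u).injective.ne hkl,
      Or.inr (Or.inl (isRhoFamily_sigb.conj_pairWord hr hu hkl))⟩
  · exact Or.inl ⟨_, _, (permOfUnits φ u).injective.ne hkl,
      Or.inr (Or.inr (isRhoFamily_tau.conj_pairWord hr hu hkl))⟩
  · exact Or.inr ⟨_, (conj_gamE hr hu j).symm⟩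

lemma conj_mem_closure_generators {u : (STVB n)ˣ} (hu : u ∈ rhoGroup n) {x : STVB n}
    (hx : x ∈ Submonoid.closure (generators n)) :
    ↑u * x * ↑u⁻¹ ∈ Submonoid.closure (generators n) := by
  induction hx using Submonoid.closure_induction with
  | mem x hx => exact Submonoid.subset_closure (conj_mem_generators hr hu hx)
  | one => simp
  | mul x y _ _ hx hy =>
    have : ↑u * (x * y) * ↑u⁻¹ = (↑u * x * ↑u⁻¹) * (↑u * y * ↑u⁻¹) := by
      simp [mul_assoc]
    rw [this]
    exact mul_mem hx hy

lemma exists_eq_units_mul (w : STVB n) :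
    ∃ u ∈ rhoGroup n, ∃ h ∈ Submonoid.closure (generators n), w = ↑u * h := by
  have hw : w ∈ Submonoid.closure (Set.range (PresentedMonoid.of (Rel n))) := by
    rw [PresentedMonoid.closure_range_of]
    trivial
  induction hw using Submonoid.closure_induction_left with
  | one => exact ⟨1, one_mem _, 1, one_mem _, by simp⟩
  | mul_left g hg w _ ih =>
    obtain ⟨a, rfl⟩ := hg
    obtain ⟨u, hu, h, hh, rfl⟩ := ih
    have pass : ∀ x ∈ Submonoid.closure (generators n),
        ∃ u' ∈ rhoGroup n, ∃ h' ∈ Submonoid.closure (generators n), x * (↑u * h) = ↑u' * h' :=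
      fun x hx => ⟨u, hu, ↑u⁻¹ * x * ↑u * h,
        mul_mem (by simpa using conj_mem_closure_generators hr (inv_mem hu) hx) hh,
        by simp [mul_assoc]⟩
    cases a with
    | rho i =>
      refine ⟨rhoU n i * u, mul_mem (rhoU_mem_rhoGroup i.isLt) hu, h, hh, ?_⟩
      rw [Units.val_mul, val_rhoU_of_lt i.isLt, mul_assoc]
      rfl
    | sig i =>
      exact pass _ (Submonoid.subset_closure
        (Or.inl ⟨fa i, fb i, fa_ne_fb i, Or.inl (sigE_eq_xel i)⟩))
    | sigb i =>
      exact pass _ (Submonoid.subset_closure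
        (Or.inl ⟨fa i, fb i, fa_ne_fb i, Or.inr (Or.inl (sigbE_eq_xBar i))⟩))
    | tau i =>
      exact pass _ (Submonoid.subset_closure
        (Or.inl ⟨fa i, fb i, fa_ne_fb i, Or.inr (Or.inr (tauE_eq_zel i))⟩))
    | gam j => exact pass _ (Submonoid.subset_closure (Or.inr ⟨j, rfl⟩))

end Assembly

end SingTVB

open SingTVB in
theorem stvh_generators_general (n : ℕ) (φ : STVB n →* Equiv.Perm (Fin n))
    (hs : ∀ i : Fin (n - 1), φ (sigE n i) = 1)
    (hsb : ∀ i : Fin (n - 1), φ (sigbE n i) = 1)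
    (ht : ∀ i : Fin (n - 1), φ (tauE n i) = 1)
    (hr : ∀ i : Fin (n - 1), φ (rhoE n i) = swp i)
    (hg : ∀ j : Fin n, φ (gamE n j) = 1) :
    Submonoid.closure
      ({x : STVB n | ∃ k l : Fin n, k ≠ l ∧ (x = xel n k l ∨ x = xBar n k l ∨ x = zel n k l)}
        ∪ Set.range (gamE n)) = MonoidHom.mker φ := by
  have hker : Submonoid.closure (generators n) ≤ MonoidHom.mker φ :=
    Submonoid.closure_le.2 (generators_subset_ker hs hsb ht hg)
  refine le_antisymm hker fun w hw => ?_
  obtain ⟨u, hu, h, hh, rfl⟩ := exists_eq_units_mul hr w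
  have hu1 : u = 1 := injOn_rhoGroup hr hu (one_mem _) <| by
    simpa [MonoidHom.mem_mker.1 (hker hh)] using MonoidHom.mem_mker.1 hw
  rwa [hu1, Units.val_one, one_mul]

open SingTVB in
/-- the submonoid `STVH n = φ₂⁻¹(1)` of `STVB n` is generated, as a monoid, by
the elements `x_{k,l}`, `x̄_{k,l}`, `z_{k,l}` (`k ≠ l`) and the `γ_j`. -/
theorem stvh_generators (n : ℕ) (hn : 2 ≤ n) (φ : STVB n →* Equiv.Perm (Fin n))
    (hs : ∀ i : Fin (n - 1), φ (sigE n i) = 1)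
    (hsb : ∀ i : Fin (n - 1), φ (sigbE n i) = 1)
    (ht : ∀ i : Fin (n - 1), φ (tauE n i) = 1)
    (hr : ∀ i : Fin (n - 1), φ (rhoE n i) = swp i)
    (hg : ∀ j : Fin n, φ (gamE n j) = 1) :
    Submonoid.closure
      ({x : STVB n | ∃ k l : Fin n, k ≠ l ∧ (x = xel n k l ∨ x = xBar n k l ∨ x = zel n k l)}
        ∪ Set.range (gamE n)) = MonoidHom.mker φ :=
  stvh_generators_general n φ hs hsb ht hr hg
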